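/- Let 1 < γ < 2 and define F : (0,1) → ℝ by F(t) = η_γ(t) − (γ/(γ−1))·t − t^γ/(1−γ). Then for each k ∈ {0,1,2}, the limit lim_{t→0⁺} t^{k−γ} · F^{(k)}(t) = 0 holds, where F^{(k)} denotes the k-th derivative of F. -/

import Mathlib

/-!
On `(0,1)` the function is `F = (log u + γ t - t^γ) / (1 - γ)` with `u = t^γ + (1-t)^γ`, so
`(1 - γ) F'' = u''/u - (u'/u)^2 - γ(γ-1) t^(γ-2)`. After multiplying by `t^(2-γ)`, the singular
part `γ(γ-1) t^(γ-2)` of `u''` cancels the last term and what remains is continuous at `0` with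
value `0`. Since also `F(0+) = F'(0+) = 0`, L'Hôpital's rule against `t^(γ-1)` and `t^γ` carries
`t^(2-γ) F'' → 0` down to `t^(1-γ) F' → 0` and `t^(-γ) F → 0`.
-/

/-- The Rényi entropy function `η_γ : ℝ → ℝ`. It vanishes outside the open unit
interval; for `t ∈ (0,1)` it equals `(1/(1-γ))·ln(t^γ + (1-t)^γ)` when `γ ≠ 1`
and `-t·ln t - (1-t)·ln(1-t)` when `γ = 1`. Powers are real powers. -/
noncomputable def renyiEntropy (γ : ℝ) (t : ℝ) : ℝ :=
  if t ∈ Set.Ioo (0 : ℝ) 1 then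
    if γ = 1 then -t * Real.log t - (1 - t) * Real.log (1 - t)
    else (1 / (1 - γ)) * Real.log (t ^ γ + (1 - t) ^ γ)
  else 0

open Real Filter Set Topology

theorem tendsto_rpow_mul_nhdsGT_zero_of_hasDerivAt {f f' : ℝ → ℝ} {q : ℝ} (hq : q < 0)
    (hf : ∀ᶠ t in 𝓝[>] 0, HasDerivAt f (f' t) t) (hf0 : Tendsto f (𝓝[>] 0) (𝓝 0))
    (hf' : Tendsto (fun t => t ^ (q + 1) * f' t) (𝓝[>] 0) (𝓝 0)) :
    Tendsto (fun t => t ^ q * f t) (𝓝[>] 0) (𝓝 0) := by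
  have hpos : ∀ᶠ t in 𝓝[>] (0 : ℝ), 0 < t := eventually_mem_nhdsWithin
  have hg : ∀ᶠ t in 𝓝[>] (0 : ℝ), HasDerivAt (fun s => s ^ (-q)) (-q * t ^ (-q - 1)) t :=
    hpos.mono fun t ht => hasDerivAt_rpow_const (Or.inl ht.ne')
  have hg' : ∀ᶠ t in 𝓝[>] (0 : ℝ), -q * t ^ (-q - 1) ≠ 0 :=
    hpos.mono fun t ht => mul_ne_zero (neg_ne_zero.2 hq.ne) (rpow_pos_of_pos ht _).ne'
  have hg0 : Tendsto (fun t : ℝ => t ^ (-q)) (𝓝[>] 0) (𝓝 0) := by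
    simpa [zero_rpow (neg_ne_zero.2 hq.ne)] using
      (continuousAt_rpow_const 0 (-q) (Or.inr (neg_nonneg.2 hq.le))).tendsto.mono_left
        nhdsWithin_le_nhds
  have hdiv : Tendsto (fun t => f' t / (-q * t ^ (-q - 1))) (𝓝[>] 0) (𝓝 0) := by
    refine (zero_div (-q) ▸ hf'.div_const (-q)).congr' (hpos.mono fun t ht => ?_)
    rw [show q + 1 = -(-q - 1) by ring, rpow_neg ht.le]
    field_simp
  refine (HasDerivAt.lhopital_zero_nhdsGT hf hg hg' hf0 hg0 hdiv).congr' (hpos.mono fun t ht => ?_)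
  rw [rpow_neg ht.le, div_inv_eq_mul, mul_comm]

section RenyiRemainder

variable {γ t : ℝ}

noncomputable def renyiPowSum (γ t : ℝ) : ℝ := t ^ γ + (1 - t) ^ γ

noncomputable def renyiPowSumDeriv (γ t : ℝ) : ℝ := γ * (t ^ (γ - 1) - (1 - t) ^ (γ - 1))

noncomputable def renyiPowSumDeriv2 (γ t : ℝ) : ℝ :=
  γ * (γ - 1) * (t ^ (γ - 2) + (1 - t) ^ (γ - 2))

noncomputable def renyiRemainder (γ t : ℝ) : ℝ :=
  (log (renyiPowSum γ t) + γ * t - t ^ γ) / (1 - γ)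

noncomputable def renyiRemainderDeriv (γ t : ℝ) : ℝ :=
  (renyiPowSumDeriv γ t / renyiPowSum γ t + γ - γ * t ^ (γ - 1)) / (1 - γ)

noncomputable def renyiRemainderDeriv2 (γ t : ℝ) : ℝ :=
  (renyiPowSumDeriv2 γ t / renyiPowSum γ t - (renyiPowSumDeriv γ t / renyiPowSum γ t) ^ 2
    - γ * (γ - 1) * t ^ (γ - 2)) / (1 - γ)

lemma renyiPowSum_pos (ht : t ∈ Ioo 0 1) : 0 < renyiPowSum γ t :=
  add_pos (rpow_pos_of_pos ht.1 γ) (rpow_pos_of_pos (sub_pos.2 ht.2) γ)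

lemma hasDerivAt_one_sub_rpow (p : ℝ) (ht : t < 1) :
    HasDerivAt (fun s => (1 - s) ^ p) (-(p * (1 - t) ^ (p - 1))) t := by
  have h := (hasDerivAt_rpow_const (p := p) (Or.inl (sub_pos.2 ht).ne')).comp t
    ((hasDerivAt_id t).const_sub 1)
  rwa [mul_neg_one] at h

lemma hasDerivAt_renyiPowSum (ht : t ∈ Ioo 0 1) :
    HasDerivAt (renyiPowSum γ) (renyiPowSumDeriv γ t) t := by
  refine ((hasDerivAt_rpow_const (p := γ) (Or.inl ht.1.ne')).add
    (hasDerivAt_one_sub_rpow γ ht.2)).congr_deriv ?_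
  simp only [renyiPowSumDeriv]
  ring

lemma hasDerivAt_renyiPowSumDeriv (ht : t ∈ Ioo 0 1) :
    HasDerivAt (renyiPowSumDeriv γ) (renyiPowSumDeriv2 γ t) t := by
  refine (((hasDerivAt_rpow_const (p := γ - 1) (Or.inl ht.1.ne')).sub
    (hasDerivAt_one_sub_rpow (γ - 1) ht.2)).const_mul γ).congr_deriv ?_
  simp only [renyiPowSumDeriv2, show γ - 1 - 1 = γ - 2 by ring]
  ring

lemma hasDerivAt_renyiRemainder (ht : t ∈ Ioo 0 1) :
    HasDerivAt (renyiRemainder γ) (renyiRemainderDeriv γ t) t := by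
  refine (((((hasDerivAt_renyiPowSum ht).log (renyiPowSum_pos ht).ne').add
    ((hasDerivAt_id t).const_mul γ)).sub
    (hasDerivAt_rpow_const (p := γ) (Or.inl ht.1.ne'))).div_const (1 - γ)).congr_deriv ?_
  simp only [renyiRemainderDeriv, mul_one]

lemma hasDerivAt_renyiRemainderDeriv (ht : t ∈ Ioo 0 1) :
    HasDerivAt (renyiRemainderDeriv γ) (renyiRemainderDeriv2 γ t) t := by
  have hU := (renyiPowSum_pos (γ := γ) ht).ne'
  refine (((((hasDerivAt_renyiPowSumDeriv ht).div (hasDerivAt_renyiPowSum ht) hU).add_const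
    γ).sub ((hasDerivAt_rpow_const (p := γ - 1) (Or.inl ht.1.ne')).const_mul γ)).div_const
    (1 - γ)).congr_deriv ?_
  simp only [renyiRemainderDeriv2, show γ - 1 - 1 = γ - 2 by ring]
  field_simp

lemma iteratedDeriv_two_renyiRemainder (ht : t ∈ Ioo 0 1) :
    iteratedDeriv 2 (renyiRemainder γ) t = renyiRemainderDeriv2 γ t := by
  rw [iteratedDeriv_succ, iteratedDeriv_one]
  have hderiv : deriv (renyiRemainder γ) =ᶠ[𝓝 t] renyiRemainderDeriv γ :=
    eventually_of_mem (isOpen_Ioo.mem_nhds ht) fun s hs => (hasDerivAt_renyiRemainder hs).deriv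
  exact hderiv.deriv_eq.trans (hasDerivAt_renyiRemainderDeriv ht).deriv

lemma eqOn_renyiEntropy_sub_renyiRemainder (hγ : γ ≠ 1) :
    EqOn (fun s => renyiEntropy γ s - (γ / (γ - 1)) * s - s ^ γ / (1 - γ))
      (renyiRemainder γ) (Ioo 0 1) := by
  intro s hs
  have h1 : 1 - γ ≠ 0 := sub_ne_zero.2 hγ.symm
  have h2 : γ - 1 ≠ 0 := sub_ne_zero.2 hγ
  simp only [renyiEntropy, if_pos hs, if_neg hγ, renyiRemainder, renyiPowSum]
  field_simp
  ring

lemma tendsto_renyiRemainder_nhdsGT_zero (hγ : 0 < γ) :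
    Tendsto (renyiRemainder γ) (𝓝[>] 0) (𝓝 0) := by
  have hcont : ContinuousAt (renyiRemainder γ) 0 :=
    (show ContinuousAt (fun t => log (renyiPowSum γ t) + γ * t - t ^ γ) 0 by
      unfold renyiPowSum
      fun_prop (disch := first | (right; linarith) | simp [zero_rpow hγ.ne'])).div_const _
  have hzero : renyiRemainder γ 0 = 0 := by
    simp [renyiRemainder, renyiPowSum, zero_rpow hγ.ne']
  simpa only [hzero] using hcont.tendsto.mono_left nhdsWithin_le_nhds

lemma tendsto_renyiRemainderDeriv_nhdsGT_zero (hγ : 1 < γ) :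
    Tendsto (renyiRemainderDeriv γ) (𝓝[>] 0) (𝓝 0) := by
  have hγ0 : γ ≠ 0 := by linarith
  have hγ1 : γ - 1 ≠ 0 := by linarith
  have hcont : ContinuousAt (renyiRemainderDeriv γ) 0 :=
    (show ContinuousAt (fun t =>
        renyiPowSumDeriv γ t / renyiPowSum γ t + γ - γ * t ^ (γ - 1)) 0 by
      unfold renyiPowSumDeriv renyiPowSum
      fun_prop (disch := first | (right; linarith) | simp [zero_rpow hγ0])).div_const _
  have hzero : renyiRemainderDeriv γ 0 = 0 := by
    simp [renyiRemainderDeriv, renyiPowSumDeriv, renyiPowSum, zero_rpow hγ0, zero_rpow hγ1]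
  simpa only [hzero] using hcont.tendsto.mono_left nhdsWithin_le_nhds

lemma rpow_two_sub_mul_renyiRemainderDeriv2 (ht : 0 < t) :
    t ^ (2 - γ) * renyiRemainderDeriv2 γ t =
      (γ * (γ - 1) * (1 + t ^ (2 - γ) * (1 - t) ^ (γ - 2)) / renyiPowSum γ t
        - (γ * (t ^ (γ / 2) - t ^ (1 - γ / 2) * (1 - t) ^ (γ - 1)) / renyiPowSum γ t) ^ 2
        - γ * (γ - 1)) / (1 - γ) := by
  have hinv : t ^ (2 - γ) * t ^ (γ - 2) = 1 := by
    rw [← rpow_add ht, sub_add_sub_cancel', sub_self, rpow_zero]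
  have hsq : (t ^ (1 - γ / 2)) ^ 2 = t ^ (2 - γ) := by
    rw [← rpow_natCast, ← rpow_mul ht.le]
    congr 1
    push_cast
    ring
  have hhalf : t ^ (1 - γ / 2) * t ^ (γ - 1) = t ^ (γ / 2) := by
    rw [← rpow_add ht]
    congr 1
    ring
  set U := renyiPowSum γ t
  set p := (1 - t) ^ (γ - 1)
  simp only [renyiRemainderDeriv2, renyiPowSumDeriv2, renyiPowSumDeriv]
  linear_combination (γ * (γ - 1) / U - γ * (γ - 1)) / (1 - γ) * hinv
    + γ ^ 2 / U ^ 2 / (1 - γ) * (t ^ (γ - 1) - p) ^ 2 * hsq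
    - γ ^ 2 / U ^ 2 / (1 - γ) * (t ^ (γ / 2) + t ^ (1 - γ / 2) * t ^ (γ - 1)
      - 2 * t ^ (1 - γ / 2) * p) * hhalf

lemma tendsto_rpow_two_sub_mul_renyiRemainderDeriv2 (hγ1 : 1 < γ) (hγ2 : γ < 2) :
    Tendsto (fun t => t ^ (2 - γ) * renyiRemainderDeriv2 γ t) (𝓝[>] 0) (𝓝 0) := by
  have hγ0 : γ ≠ 0 := by linarith
  have hcont : ContinuousAt (fun t : ℝ =>
      (γ * (γ - 1) * (1 + t ^ (2 - γ) * (1 - t) ^ (γ - 2)) / renyiPowSum γ t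
        - (γ * (t ^ (γ / 2) - t ^ (1 - γ / 2) * (1 - t) ^ (γ - 1)) / renyiPowSum γ t) ^ 2
        - γ * (γ - 1))) 0 := by
    unfold renyiPowSum
    fun_prop (disch := first | (right; linarith) | simp [zero_rpow hγ0])
  refine Tendsto.congr' (eventually_mem_nhdsWithin.mono fun t ht =>
    (rpow_two_sub_mul_renyiRemainderDeriv2 ht).symm) ?_
  simpa [renyiPowSum, zero_rpow hγ0, zero_rpow (by linarith : 0 < 2 - γ).ne',
    zero_rpow (by linarith : 0 < γ / 2).ne', zero_rpow (by linarith : 0 < 1 - γ / 2).ne'] using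
    (hcont.div_const (1 - γ)).tendsto.mono_left nhdsWithin_le_nhds

end RenyiRemainder

/-- For `1 < γ < 2` and `F(t) = η_γ(t) − (γ/(γ−1))·t − t^γ/(1−γ)`, one has
`lim_{t→0⁺} t^{k−γ}·F^{(k)}(t) = 0` for `k = 0, 1, 2`. -/
theorem renyiEntropy_eff_between_one_two {γ : ℝ} (hγ1 : 1 < γ) (hγ2 : γ < 2)
    (k : ℕ) (hk : k ≤ 2) :
    Filter.Tendsto
      (fun t : ℝ => t ^ ((k : ℝ) - γ)
        * iteratedDeriv k
            (fun s : ℝ => renyiEntropy γ s - (γ / (γ - 1)) * s - s ^ γ / (1 - γ)) t)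
      (nhdsWithin 0 (Set.Ioi 0)) (nhds 0) := by
  have hunit : ∀ᶠ t in 𝓝[>] (0 : ℝ), t ∈ Ioo 0 1 := Ioo_mem_nhdsGT one_pos
  have hderiv {f f' : ℝ → ℝ} (hf : ∀ t ∈ Ioo (0 : ℝ) 1, HasDerivAt f (f' t) t) :
      ∀ᶠ t in 𝓝[>] (0 : ℝ), HasDerivAt f (f' t) t := hunit.mono hf
  have h2 := tendsto_rpow_two_sub_mul_renyiRemainderDeriv2 hγ1 hγ2
  have h1 : Tendsto (fun t => t ^ (1 - γ) * renyiRemainderDeriv γ t) (𝓝[>] 0) (𝓝 0) :=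
    tendsto_rpow_mul_nhdsGT_zero_of_hasDerivAt (by linarith)
      (hderiv fun _ => hasDerivAt_renyiRemainderDeriv)
      (tendsto_renyiRemainderDeriv_nhdsGT_zero hγ1) (by rwa [show 1 - γ + 1 = 2 - γ by ring])
  have h0 : Tendsto (fun t => t ^ (-γ) * renyiRemainder γ t) (𝓝[>] 0) (𝓝 0) :=
    tendsto_rpow_mul_nhdsGT_zero_of_hasDerivAt (by linarith)
      (hderiv fun _ => hasDerivAt_renyiRemainder)
      (tendsto_renyiRemainder_nhdsGT_zero (by linarith)) (by rwa [neg_add_eq_sub])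
  have hF := (eqOn_renyiEntropy_sub_renyiRemainder hγ1.ne').iteratedDeriv_of_isOpen isOpen_Ioo k
  interval_cases k
  · refine h0.congr' (hunit.mono fun t ht => ?_)
    dsimp only
    rw [hF ht]
    simp
  · refine h1.congr' (hunit.mono fun t ht => ?_)
    dsimp only
    rw [hF ht, iteratedDeriv_one, (hasDerivAt_renyiRemainder ht).deriv]
    norm_num
  · refine h2.congr' (hunit.mono fun t ht => ?_)
    dsimp only
    rw [hF ht, iteratedDeriv_two_renyiRemainder ht]
    norm_num
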